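/- Let L be a Lie conformal superalgebra with trivial center Z(L) = 0, let A be a unital associative commutative ℂ-algebra with basis {b_t : t ∈ T}, and let Ψ be a homogeneous linear super-commuting map on the current Lie conformal superalgebra L ⊗ A. Write Ψ_λ(u ⊗ 1) = Σ_{t∈T} Ψ̄_{λ,t}(u) ⊗ b_t with Ψ̄_{λ,t}(u) ∈ ℂ[λ] ⊗ L. Then each component map Ψ̄_t : L → ℂ[λ] ⊗ L is a linear super-commuting map on L of the same parity as Ψ, i.e., [Ψ̄_{λ,t}(u)_{λ+μ} u] = 0 for all u ∈ L. -/

import Mathlib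

open scoped TensorProduct

noncomputable section

/-- The sign `(−1)^i` for a parity `i : ZMod 2`. -/
def sg (i : ZMod 2) : ℂ := if i = 0 then 1 else -1

/-- A finitely supported family `f : ℕ →₀ L` encodes the polynomial `∑ₙ λ^n • (f n)`
in `ℂ[λ] ⊗ L`; this evaluates it at `lam : ℂ`. -/
def evalPoly {L : Type*} [AddCommGroup L] [Module ℂ L] (lam : ℂ) (f : ℕ →₀ L) : L :=
  f.sum fun n c => lam ^ n • c

/-- Evaluation of the polynomial encoded by `f : ℕ →₀ L` at an operator `T`
(used to substitute expressions like `−λ−∂` for the formal variable). -/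
def evalPolyOp {L : Type*} [AddCommGroup L] [Module ℂ L] (T : Module.End ℂ L)
    (f : ℕ →₀ L) : L :=
  f.sum fun n c => (T ^ n) c

/-- A Lie conformal superalgebra: a `ℤ/2`-graded `ℂ[∂]`-module with a λ-bracket
`[x_λ y] = ∑ₙ λ^n • (coeff x y n)` satisfying conformal sesquilinearity, skew-symmetry
and the graded Jacobi identity. -/
structure LieConformalSuperAlgebra (L : Type*) [AddCommGroup L] [Module ℂ L] where
  /-- the operator `∂` -/
  D : L →ₗ[ℂ] L
  /-- the `ℤ/2`-grading `L = L₀ ⊕ L₁` -/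
  grading : ZMod 2 → Submodule ℂ L
  isInternal : DirectSum.IsInternal grading
  D_mem : ∀ (i : ZMod 2) (x : L), x ∈ grading i → D x ∈ grading i
  /-- coefficients of the λ-bracket: `[x_λ y] = ∑ₙ λ^n • coeff x y n` -/
  coeff : L →ₗ[ℂ] L →ₗ[ℂ] (ℕ →₀ L)
  coeff_mem : ∀ (i j : ZMod 2) (x y : L), x ∈ grading i → y ∈ grading j →
    ∀ n, coeff x y n ∈ grading (i + j)
  /-- `[∂x_λ y] = −λ [x_λ y]` -/
  sesq₁ : ∀ (lam : ℂ) (x y : L),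
    evalPoly lam (coeff (D x) y) = (-lam) • evalPoly lam (coeff x y)
  /-- `[x_λ ∂y] = (∂+λ) [x_λ y]` -/
  sesq₂ : ∀ (lam : ℂ) (x y : L),
    evalPoly lam (coeff x (D y)) = D (evalPoly lam (coeff x y)) + lam • evalPoly lam (coeff x y)
  /-- `[x_λ y] = −(−1)^{|x||y|} [y_{−λ−∂} x]` -/
  skew : ∀ (i j : ZMod 2) (x y : L), x ∈ grading i → y ∈ grading j → ∀ lam : ℂ,
    evalPoly lam (coeff x y)
      = -(sg (i * j)) • evalPolyOp ((-lam) • (1 : Module.End ℂ L) - D) (coeff y x)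
  /-- `[x_λ [y_μ z]] = [[x_λ y]_{λ+μ} z] + (−1)^{|x||y|} [y_μ [x_λ z]]` -/
  jacobi : ∀ (i j : ZMod 2) (x y z : L), x ∈ grading i → y ∈ grading j → ∀ lam mu : ℂ,
    evalPoly lam (coeff x (evalPoly mu (coeff y z)))
      = evalPoly (lam + mu) (coeff (evalPoly lam (coeff x y)) z)
        + sg (i * j) • evalPoly mu (coeff y (evalPoly lam (coeff x z)))

namespace LieConformalSuperAlgebra

variable {L : Type*} [AddCommGroup L] [Module ℂ L]

/-- The λ-bracket `[x_λ y]`, evaluated at `lam : ℂ`. -/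
def brk (S : LieConformalSuperAlgebra L) (lam : ℂ) (x y : L) : L :=
  evalPoly lam (S.coeff x y)

/-- The λ-bracket with an operator (e.g. `−λ−μ−∂`) substituted for the formal variable. -/
def brkOp (S : LieConformalSuperAlgebra L) (T : Module.End ℂ L) (x y : L) : L :=
  evalPolyOp T (S.coeff x y)

/-- The center `Z(L) = {x : [x_λ y] = 0 for all λ, y}`. -/
def center (S : LieConformalSuperAlgebra L) : Set L :=
  {x : L | ∀ (lam : ℂ) (y : L), S.brk lam x y = 0}

/-- `L` is perfect: it is spanned, as a `ℂ[∂]`-module, by the coefficients of all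
brackets `[x_λ y]`. -/
def IsPerfect (S : LieConformalSuperAlgebra L) : Prop :=
  Submodule.span ℂ
    {z : L | ∃ (x y : L) (n k : ℕ), z = ((S.D : Module.End ℂ L) ^ k) (S.coeff x y n)} = ⊤

end LieConformalSuperAlgebra

/-- A conformal super-biderivation `φ_λ(x,y) = ∑ₙ λ^n • coeff x y n` of parity `parity`:
a conformal bilinear map, compatible with the grading shifted by `parity`, which is
skew-symmetric and a conformal derivation in its second argument. -/
structure SuperBiderivation {L : Type*} [AddCommGroup L] [Module ℂ L]
    (S : LieConformalSuperAlgebra L) where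
  coeff : L →ₗ[ℂ] L →ₗ[ℂ] (ℕ →₀ L)
  parity : ZMod 2
  mem : ∀ (i j : ZMod 2) (x y : L), x ∈ S.grading i → y ∈ S.grading j →
    ∀ n, coeff x y n ∈ S.grading (i + j + parity)
  /-- `φ_λ(∂x, y) = −λ φ_λ(x, y)` -/
  conf₁ : ∀ (lam : ℂ) (x y : L),
    evalPoly lam (coeff (S.D x) y) = (-lam) • evalPoly lam (coeff x y)
  /-- `φ_λ(x, ∂y) = (∂+λ) φ_λ(x, y)` -/
  conf₂ : ∀ (lam : ℂ) (x y : L),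
    evalPoly lam (coeff x (S.D y))
      = S.D (evalPoly lam (coeff x y)) + lam • evalPoly lam (coeff x y)
  /-- `φ_λ(x,y) = −(−1)^{|x||y|} φ_{−∂−λ}(y,x)` -/
  skew : ∀ (i j : ZMod 2) (x y : L), x ∈ S.grading i → y ∈ S.grading j → ∀ lam : ℂ,
    evalPoly lam (coeff x y)
      = -(sg (i * j)) • evalPolyOp ((-lam) • (1 : Module.End ℂ L) - S.D) (coeff y x)
  /-- `φ_λ(x,[y_μ z]) = [φ_λ(x,y)_{λ+μ} z] + (−1)^{|x||y|} [y_μ φ_λ(x,z)]` -/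
  deriv : ∀ (i j : ZMod 2) (x y z : L), x ∈ S.grading i → y ∈ S.grading j → ∀ lam mu : ℂ,
    evalPoly lam (coeff x (S.brk mu y z))
      = S.brk (lam + mu) (evalPoly lam (coeff x y)) z
        + sg (i * j) • S.brk mu y (evalPoly lam (coeff x z))

/-- `φ_λ(x, y)` evaluated at `lam : ℂ`. -/
def SuperBiderivation.app {L : Type*} [AddCommGroup L] [Module ℂ L]
    {S : LieConformalSuperAlgebra L} (φ : SuperBiderivation S) (lam : ℂ) (x y : L) : L :=
  evalPoly lam (φ.coeff x y)

/-- An element of the centroid `Cent(L)`: a homogeneous conformal linear map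
`α_λ : L → ℂ[λ] ⊗ L` of parity `parity` with `α_λ([x_μ y]) = (−1)^{|x||α|} [x_μ α_λ(y)]`. -/
structure CentroidElem {L : Type*} [AddCommGroup L] [Module ℂ L]
    (S : LieConformalSuperAlgebra L) where
  coeff : L →ₗ[ℂ] (ℕ →₀ L)
  parity : ZMod 2
  mem : ∀ (i : ZMod 2) (x : L), x ∈ S.grading i → ∀ n, coeff x n ∈ S.grading (i + parity)
  /-- conformal linearity: `α_λ(∂x) = (∂+λ) α_λ(x)` -/
  conf : ∀ (lam : ℂ) (x : L),
    evalPoly lam (coeff (S.D x)) = S.D (evalPoly lam (coeff x)) + lam • evalPoly lam (coeff x)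
  /-- `α_λ([x_μ y]) = (−1)^{|x||α|} [x_μ α_λ(y)]` -/
  central : ∀ (i : ZMod 2) (x y : L), x ∈ S.grading i → ∀ lam mu : ℂ,
    evalPoly lam (coeff (S.brk mu x y)) = sg (i * parity) • S.brk mu x (evalPoly lam (coeff y))

/-- `α_λ(x)` evaluated at `lam : ℂ`. -/
def CentroidElem.app {L : Type*} [AddCommGroup L] [Module ℂ L]
    {S : LieConformalSuperAlgebra L} (α : CentroidElem S) (lam : ℂ) (x : L) : L :=
  evalPoly lam (α.coeff x)

/-- A homogeneous linear super-commuting map: a conformal linear map `Ψ_λ` of parity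
`parity`, shifting the grading by `parity`, with `[Ψ_λ(u)_{λ+μ} u] = 0` for all `u`. -/
structure SuperCommutingMap {L : Type*} [AddCommGroup L] [Module ℂ L]
    (S : LieConformalSuperAlgebra L) where
  coeff : L →ₗ[ℂ] (ℕ →₀ L)
  parity : ZMod 2
  mem : ∀ (i : ZMod 2) (x : L), x ∈ S.grading i → ∀ n, coeff x n ∈ S.grading (i + parity)
  /-- conformal linearity: `Ψ_λ(∂x) = (∂+λ) Ψ_λ(x)` -/
  conf : ∀ (lam : ℂ) (x : L),
    evalPoly lam (coeff (S.D x)) = S.D (evalPoly lam (coeff x)) + lam • evalPoly lam (coeff x)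
  /-- `[Ψ_λ(u)_{λ+μ} u] = 0` -/
  commuting : ∀ (lam mu : ℂ) (u : L), S.brk (lam + mu) (evalPoly lam (coeff u)) u = 0

/-- `Ψ_λ(x)` evaluated at `lam : ℂ`. -/
def SuperCommutingMap.app {L : Type*} [AddCommGroup L] [Module ℂ L]
    {S : LieConformalSuperAlgebra L} (Ψ : SuperCommutingMap S) (lam : ℂ) (x : L) : L :=
  evalPoly lam (Ψ.coeff x)

/-- The `t`-th component map `L ⊗ A → L` relative to a basis `B` of `A`:
if `w = ∑ₜ wₜ ⊗ bₜ` then `tensorComponent B t w = wₜ`. -/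
def tensorComponent {L : Type*} [AddCommGroup L] [Module ℂ L]
    {A : Type*} [CommRing A] [Algebra ℂ A] {ι : Type*} (B : Module.Basis ι ℂ A) (t : ι) :
    L ⊗[ℂ] A →ₗ[ℂ] L :=
  (TensorProduct.rid ℂ L).toLinearMap ∘ₗ
    TensorProduct.map (LinearMap.id : L →ₗ[ℂ] L) (B.coord t)

section Aux

variable {L : Type*} [AddCommGroup L] [Module ℂ L]

lemma evalPoly_zero (lam : ℂ) : evalPoly lam (0 : ℕ →₀ L) = 0 :=
  Finsupp.sum_zero_index

lemma evalPoly_add (lam : ℂ) (f g : ℕ →₀ L) :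
    evalPoly lam (f + g) = evalPoly lam f + evalPoly lam g :=
  Finsupp.sum_add_index' (fun n => smul_zero _) (fun n a b => smul_add _ a b)

lemma evalPoly_smul (lam c : ℂ) (f : ℕ →₀ L) :
    evalPoly lam (c • f) = c • evalPoly lam f := by
  unfold evalPoly
  rw [Finsupp.sum_smul_index' (fun i => smul_zero _), Finsupp.smul_sum]
  exact Finsupp.sum_congr fun n _ => smul_comm _ _ _

lemma evalPoly_mem {p : Submodule ℂ L} (lam : ℂ) {f : ℕ →₀ L}
    (hf : ∀ n, f n ∈ p) : evalPoly lam f ∈ p :=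
  Submodule.sum_mem p fun n _ => p.smul_mem _ (hf n)

lemma tensorComponent_tmul {A : Type*} [CommRing A] [Algebra ℂ A] {ι : Type*}
    (B : Module.Basis ι ℂ A) (t : ι) (x : L) (a : A) :
    tensorComponent B t (x ⊗ₜ[ℂ] a) = B.coord t a • x := by
  simp [tensorComponent]

lemma brk_smul (S : LieConformalSuperAlgebra L) (lam c : ℂ) (x y : L) :
    S.brk lam (c • x) y = c • S.brk lam x y := by
  unfold LieConformalSuperAlgebra.brk
  rw [map_smul, LinearMap.smul_apply, evalPoly_smul]

lemma brk_add (S : LieConformalSuperAlgebra L) (lam : ℂ) (x x' y : L) :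
    S.brk lam (x + x') y = S.brk lam x y + S.brk lam x' y := by
  unfold LieConformalSuperAlgebra.brk
  rw [map_add, LinearMap.add_apply, evalPoly_add]

lemma brk_zero (S : LieConformalSuperAlgebra L) (lam : ℂ) (y : L) :
    S.brk lam 0 y = 0 := by
  unfold LieConformalSuperAlgebra.brk
  rw [map_zero, LinearMap.zero_apply, evalPoly_zero]

end Aux

/-- Let `Z(L) = 0` and let `Ψ` be a homogeneous linear
super-commuting map on the current algebra `L ⊗ A`, with components
`Ψ̄_{λ,t}(u)` of `Ψ_λ(u⊗1)` relative to a basis `{bₜ}` of `A`.  Then each component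
`Ψ̄ₜ` is a linear super-commuting map on `L` of the same parity as `Ψ`:
it shifts the grading by `|Ψ|` and `[Ψ̄_{λ,t}(u)_{λ+μ} u] = 0`. -/
theorem current_commutingMap_component {L : Type*} [AddCommGroup L] [Module ℂ L]
    (S : LieConformalSuperAlgebra L)
    {A : Type*} [CommRing A] [Algebra ℂ A]
    (T : LieConformalSuperAlgebra (L ⊗[ℂ] A))
    (hD : ∀ (x : L) (a : A), T.D (x ⊗ₜ[ℂ] a) = S.D x ⊗ₜ[ℂ] a)
    (hgr : ∀ i : ZMod 2, T.grading i
      = LinearMap.range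
          (TensorProduct.map (S.grading i).subtype (LinearMap.id : A →ₗ[ℂ] A)))
    (hbrk : ∀ (lam : ℂ) (x y : L) (a b : A),
      T.brk lam (x ⊗ₜ[ℂ] a) (y ⊗ₜ[ℂ] b) = (S.brk lam x y) ⊗ₜ[ℂ] (a * b))
    (hZ : ∀ x : L, x ∈ S.center → x = 0)
    {ι : Type*} (B : Module.Basis ι ℂ A)
    (Ψ : SuperCommutingMap T) (t : ι) :
    (∀ (i : ZMod 2) (u : L), u ∈ S.grading i → ∀ lam : ℂ,
      tensorComponent B t (Ψ.app lam (u ⊗ₜ[ℂ] (1 : A))) ∈ S.grading (i + Ψ.parity)) ∧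
    (∀ (u : L) (lam mu : ℂ),
      S.brk (lam + mu) (tensorComponent B t (Ψ.app lam (u ⊗ₜ[ℂ] (1 : A)))) u = 0) := by
  -- component of graded elements
  have hcomp : ∀ (j : ZMod 2) (w : L ⊗[ℂ] A), w ∈ T.grading j →
      tensorComponent B t w ∈ S.grading j := by
    intro j w hw
    rw [hgr j] at hw
    obtain ⟨p, rfl⟩ := hw
    induction p using TensorProduct.induction_on with
    | zero => simpa using (S.grading j).zero_mem
    | tmul x a =>
        simp only [TensorProduct.map_tmul, LinearMap.id_coe, id_eq,
          Submodule.coe_subtype, tensorComponent_tmul]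
        exact (S.grading j).smul_mem _ x.2
    | add p q hp hq =>
        rw [map_add, map_add]
        exact (S.grading j).add_mem hp hq
  -- key bracket identity
  have hkey : ∀ (ν : ℂ) (u : L) (w : L ⊗[ℂ] A),
      tensorComponent B t (T.brk ν w (u ⊗ₜ[ℂ] (1 : A))) =
        S.brk ν (tensorComponent B t w) u := by
    intro ν u w
    induction w using TensorProduct.induction_on with
    | zero => rw [brk_zero, map_zero, brk_zero]
    | tmul x a =>
        rw [hbrk, mul_one, tensorComponent_tmul, tensorComponent_tmul, brk_smul]
    | add p q hp hq =>
        rw [brk_add, map_add, hp, hq, map_add, brk_add]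
  constructor
  · intro i u hu lam
    have hu1 : (u ⊗ₜ[ℂ] (1 : A)) ∈ T.grading i := by
      rw [hgr i]
      exact ⟨(⟨u, hu⟩ : S.grading i) ⊗ₜ[ℂ] (1 : A), rfl⟩
    exact hcomp _ _ (evalPoly_mem lam fun n => Ψ.mem i _ hu1 n)
  · intro u lam mu
    have h := Ψ.commuting lam mu (u ⊗ₜ[ℂ] (1 : A))
    have := hkey (lam + mu) u (evalPoly lam (Ψ.coeff (u ⊗ₜ[ℂ] (1 : A))))
    rw [h, map_zero] at this
    exact this.symm
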